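/- Let T ⊂ ℝ² be the triod, i.e. the union of the three segments from the origin O to the points A, B, C, where A, B, C are three distinct unit vectors. There exists a continuous map p : D² → T such that p(x) ≠ p(-x) for every x in the boundary circle S¹ = ∂D². -/

import Mathlib

/-!
Let u₀, u₁, u₂ be unit vectors of the plane at angles 120° apart, and aᵢ = ⟪uᵢ, x⟫. Then
∑ aᵢ = 0 and ∑ aᵢ² = 3/2 ‖x‖². Send x to ∑ (aᵢ - 1/2)⁺ • Vᵢ with (V₀, V₁, V₂) = (A, B, C).
On the disk at most one aᵢ exceeds 1/2, so x lands on a single leg of the triod, and a point of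
the triod determines its coefficients. If x and -x had the same image, (aᵢ - 1/2)⁺ = (-aᵢ - 1/2)⁺
would force |aᵢ| ≤ 1/2 for every i, which is impossible when ∑ aᵢ² = 3/2.
-/

open Function Finset RealInnerProductSpace

section Star

variable {ι E : Type*} [Fintype ι] [NormedAddCommGroup E] [NormedSpace ℝ E]

theorem sum_smul_eq_of_support_subset_singleton {V : ι → E} {c : ι → ℝ} {j : ι}
    (hc : support c ⊆ {j}) : ∑ i, c i • V i = c j • V j :=
  Finset.sum_eq_single j (fun i _ hij => by
    rw [notMem_support.1 fun hi => hij (hc hi), zero_smul]) (by simp)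

omit [Fintype ι] in
theorem eq_single_of_support_subset_singleton [DecidableEq ι] {c : ι → ℝ} {j : ι}
    (hc : support c ⊆ {j}) : c = Pi.single j (c j) := by
  ext i
  by_cases hij : i = j
  · subst hij; simp
  · rw [Pi.single_eq_of_ne hij, ← notMem_support]
    exact fun hi => hij (hc hi)

theorem eq_and_eq_of_smul_eq_smul_of_norm_eq_one {V W : E} (hV : ‖V‖ = 1) (hW : ‖W‖ = 1)
    {s t : ℝ} (hs : 0 < s) (ht : 0 ≤ t) (h : s • V = t • W) : s = t ∧ V = W := by
  have hst : s = t := by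
    simpa [norm_smul, hV, hW, abs_of_pos hs, abs_of_nonneg ht] using congrArg norm h
  subst hst
  exact ⟨rfl, smul_right_injective E hs.ne' h⟩

theorem injOn_sum_smul_of_norm_eq_one {V : ι → E} (hV : ∀ i, ‖V i‖ = 1)
    (hinj : Injective V) :
    Set.InjOn (fun c : ι → ℝ => ∑ i, c i • V i) {c | 0 ≤ c ∧ ∃ j, support c ⊆ {j}} := by
  classical
  rintro c ⟨hc0, j, hj⟩ d ⟨hd0, k, hk⟩ h
  simp only [sum_smul_eq_of_support_subset_singleton hj,
    sum_smul_eq_of_support_subset_singleton hk] at h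
  rw [eq_single_of_support_subset_singleton hj, eq_single_of_support_subset_singleton hk]
  rcases (show 0 ≤ c j from hc0 j).eq_or_lt with hcj | hcj
  · have hdk : d k = 0 := by
      simpa [norm_smul, hV, ← hcj, abs_of_nonneg (hd0 k)] using (congrArg norm h).symm
    rw [← hcj, hdk, Pi.single_zero, Pi.single_zero]
  · obtain ⟨hcd, hVjk⟩ := eq_and_eq_of_smul_eq_smul_of_norm_eq_one (hV j) (hV k) hcj (hd0 k) h
    rw [hcd, hinj hVjk]

theorem sum_smul_mem_iUnion_segment {V : ι → E} {c : ι → ℝ} (hc0 : 0 ≤ c) (hc1 : c ≤ 1) {j : ι}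
    (hj : support c ⊆ {j}) : ∑ i, c i • V i ∈ ⋃ i, segment ℝ 0 (V i) := by
  rw [sum_smul_eq_of_support_subset_singleton hj]
  exact Set.mem_iUnion.2
    ⟨j, 1 - c j, c j, by linarith [show c j ≤ 1 from hc1 j], hc0 j, by ring, by simp⟩

end Star

theorem exists_half_lt_abs_of_card_div_four_lt_sum_sq {ι : Type*} [Fintype ι] {a : ι → ℝ}
    (h : Fintype.card ι / 4 < ∑ i, a i ^ 2) : ∃ i, 1 / 2 < |a i| := by
  by_contra! hle
  have : ∑ i, a i ^ 2 ≤ ∑ _i : ι, (1 / 4 : ℝ) :=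
    Finset.sum_le_sum fun i _ => by nlinarith [abs_nonneg (a i), hle i, sq_abs (a i)]
  simp only [sum_const, card_univ, nsmul_eq_mul] at this
  linarith

theorem subsingleton_setOf_half_lt {a : Fin 3 → ℝ} (hsum : ∑ i, a i = 0)
    (hsq : ∑ i, a i ^ 2 ≤ 3 / 2) : {i | 1 / 2 < a i}.Subsingleton := by
  intro i hi j hj
  -- two coordinates above 1/2 push the third below -1
  simp only [Fin.sum_univ_three] at hsum hsq
  simp only [Set.mem_ofPred_eq] at hi hj
  by_contra hij
  fin_cases i <;> fin_cases j <;> simp at hij hi hj <;> nlinarith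

noncomputable def mercedesFrame : Fin 3 → EuclideanSpace ℝ (Fin 2) :=
  ![!₂[1, 0], !₂[-1 / 2, √3 / 2], !₂[-1 / 2, -(√3 / 2)]]

theorem sum_mercedesFrame : ∑ i, mercedesFrame i = 0 := by
  ext k
  fin_cases k <;> simp [mercedesFrame, Fin.sum_univ_three]
  norm_num

theorem sum_inner_mercedesFrame_sq (x : EuclideanSpace ℝ (Fin 2)) :
    ∑ i, ⟪mercedesFrame i, x⟫ ^ 2 = 3 / 2 * ‖x‖ ^ 2 := by
  have h3 : √3 ^ 2 = 3 := Real.sq_sqrt (by norm_num)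
  simp [mercedesFrame, Fin.sum_univ_three, EuclideanSpace.real_norm_sq_eq, PiLp.inner_apply]
  linear_combination (x 1 ^ 2 / 2) * h3

theorem sum_inner_mercedesFrame (x : EuclideanSpace ℝ (Fin 2)) :
    ∑ i, ⟪mercedesFrame i, x⟫ = 0 := by
  rw [← sum_inner, sum_mercedesFrame, inner_zero_left]

noncomputable def capCoeff (x : EuclideanSpace ℝ (Fin 2)) (i : Fin 3) : ℝ :=
  (⟪mercedesFrame i, x⟫ - 1 / 2)⁺

theorem continuous_capCoeff (i : Fin 3) : Continuous fun x => capCoeff x i :=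
  continuous_posPart.comp ((continuous_const.inner continuous_id).sub continuous_const)

theorem capCoeff_le_one {x : EuclideanSpace ℝ (Fin 2)} (hx : ‖x‖ ≤ 1) : capCoeff x ≤ 1 := by
  intro i
  have hi : ⟪mercedesFrame i, x⟫ ^ 2 ≤ 3 / 2 := calc
    _ ≤ ∑ j, ⟪mercedesFrame j, x⟫ ^ 2 :=
      single_le_sum (fun j _ => sq_nonneg _) (mem_univ i)
    _ ≤ 3 / 2 := by
      rw [sum_inner_mercedesFrame_sq]; nlinarith [norm_nonneg x]
  show (⟪mercedesFrame i, x⟫ - 1 / 2)⁺ ≤ 1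
  exact sup_le (by nlinarith) zero_le_one

theorem exists_support_capCoeff_subset_singleton {x : EuclideanSpace ℝ (Fin 2)} (hx : ‖x‖ ≤ 1) :
    ∃ j, support (capCoeff x) ⊆ {j} := by
  have hsupp : support (capCoeff x) = {i | 1 / 2 < ⟪mercedesFrame i, x⟫} := by
    ext i
    simp [capCoeff]
  have hsq : ∑ i, ⟪mercedesFrame i, x⟫ ^ 2 ≤ 3 / 2 := by
    rw [sum_inner_mercedesFrame_sq]; nlinarith [norm_nonneg x]
  rcases (subsingleton_setOf_half_lt (sum_inner_mercedesFrame x) hsq).eq_empty_or_singleton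
    with h | ⟨j, h⟩
  · exact ⟨0, by rw [hsupp, h]; exact Set.empty_subset _⟩
  · exact ⟨j, by rw [hsupp, h]⟩

theorem capCoeff_neg_ne {x : EuclideanSpace ℝ (Fin 2)} (hx : ‖x‖ = 1) :
    capCoeff (-x) ≠ capCoeff x := by
  obtain ⟨i, hi⟩ : ∃ i, 1 / 2 < |⟪mercedesFrame i, x⟫| :=
    exists_half_lt_abs_of_card_div_four_lt_sum_sq (by
      rw [sum_inner_mercedesFrame_sq, hx]; norm_num)
  intro h
  have hi' := congrFun h i
  simp only [capCoeff, inner_neg_right] at hi'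
  rcases lt_abs.1 hi with hi | hi
  · rw [posPart_eq_zero.2 (by linarith)] at hi'
    linarith [posPart_pos (show 0 < ⟪mercedesFrame i, x⟫ - 1 / 2 by linarith)]
  · rw [posPart_eq_zero.2 (show ⟪mercedesFrame i, x⟫ - 1 / 2 ≤ 0 by linarith)] at hi'
    linarith [posPart_pos (show 0 < -⟪mercedesFrame i, x⟫ - 1 / 2 by linarith)]

/-- There is a continuous map from the disk `D²` to the triod `T` which does not
identify any pair of antipodal boundary points. -/
theorem exists_map_disk_to_triod_no_antipodes_identified
    (A B C : EuclideanSpace ℝ (Fin 2))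
    (hA : ‖A‖ = 1) (hB : ‖B‖ = 1) (hC : ‖C‖ = 1)
    (hAB : A ≠ B) (hAC : A ≠ C) (hBC : B ≠ C) :
    ∃ p : EuclideanSpace ℝ (Fin 2) → EuclideanSpace ℝ (Fin 2),
      ContinuousOn p (Metric.closedBall 0 1) ∧
      Set.MapsTo p (Metric.closedBall 0 1)
        (segment ℝ 0 A ∪ segment ℝ 0 B ∪ segment ℝ 0 C) ∧
      ∀ x ∈ Metric.sphere (0 : EuclideanSpace ℝ (Fin 2)) 1, p x ≠ p (-x) := by
  set V : Fin 3 → EuclideanSpace ℝ (Fin 2) := ![A, B, C]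
  have hV : ∀ i, ‖V i‖ = 1 := by simp [V, Fin.forall_fin_succ, hA, hB, hC]
  have hVinj : Injective V := by
    intro i j h
    fin_cases i <;> fin_cases j <;> simp_all [V, eq_comm]
  have hcoeff {x : EuclideanSpace ℝ (Fin 2)} (hx : ‖x‖ ≤ 1) :
      capCoeff x ∈ {c | 0 ≤ c ∧ ∃ j, support c ⊆ {j}} :=
    ⟨fun i => posPart_nonneg _, exists_support_capCoeff_subset_singleton hx⟩
  refine ⟨fun x => ∑ i, capCoeff x i • V i, ?_, fun x hx => ?_, fun x hx h => ?_⟩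
  · exact (continuous_finsetSum _ fun i _ =>
      (continuous_capCoeff i).smul continuous_const).continuousOn
  · rw [mem_closedBall_zero_iff] at hx
    obtain ⟨j, hj⟩ := exists_support_capCoeff_subset_singleton hx
    simpa [V, Fin.exists_fin_succ, or_assoc] using
      sum_smul_mem_iUnion_segment (V := V) (hcoeff hx).1 (capCoeff_le_one hx) hj
  · rw [mem_sphere_zero_iff_norm] at hx
    exact capCoeff_neg_ne hx <| injOn_sum_smul_of_norm_eq_one hV hVinj
      (hcoeff (by rw [norm_neg, hx])) (hcoeff hx.le) h.symm
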